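/- arXiv:1211.3197 — 2 statements merged into one kernel-verified Lean document; each statement's English description precedes it below -/
import Mathlib

section
/- Let A be an n×n indecomposable, symmetrizable Cartan matrix of indefinite type whose upper-left (n−1)×(n−1) principal submatrix A' is also indecomposable and symmetrizable, and let ψ be a nonzero element of I²(A). Then the polynomial ψ' obtained from ψ by the substitution ω_n ↦ 0 is a nonzero element of I²(A'). -/
open MvPolynomial Matrix

section Defs

variable {ι : Type*} [Fintype ι] [DecidableEq ι]

/-- An integer matrix is a (generalized) Cartan matrix. -/
def IsCartanMatrix (A : Matrix ι ι ℤ) : Prop :=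
  (∀ i, A i i = 2) ∧ (∀ i j, i ≠ j → A i j ≤ 0) ∧ ∀ i j, A i j = 0 → A j i = 0

/-- The simple root `α_i = ∑ j, a_{ji} ω_j`, viewed inside `ℚ[ω_1, …, ω_n]`. -/
noncomputable def simpleRoot (A : Matrix ι ι ℤ) (i : ι) : MvPolynomial ι ℚ :=
  ∑ j, (A j i : ℚ) • X j

/-- The Weyl reflection `σ_i`, the ℚ-algebra endomorphism with `σ_i(ω_j) = ω_j - δ_{ij} α_i`. -/
noncomputable def weylRefl (A : Matrix ι ι ℤ) (i : ι) :
    MvPolynomial ι ℚ →ₐ[ℚ] MvPolynomial ι ℚ :=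
  aeval fun j => X j - if j = i then simpleRoot A i else 0

/-- A polynomial is `W(A)`-invariant iff it is fixed by every simple reflection. -/
def WeylInvariant (A : Matrix ι ι ℤ) (f : MvPolynomial ι ℚ) : Prop :=
  ∀ i, weylRefl A i f = f

/-- Indecomposability of a Cartan matrix. -/
def Indecomposable (A : Matrix ι ι ℤ) : Prop :=
  ¬∃ I J : Set ι, I.Nonempty ∧ J.Nonempty ∧ Disjoint I J ∧ I ∪ J = Set.univ ∧
    ∀ i ∈ I, ∀ j ∈ J, A i j = 0

/-- `A` is symmetrizable: `A = D B` with `D` invertible diagonal and `B` symmetric. -/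
def Symmetrizable (A : Matrix ι ι ℤ) : Prop :=
  ∃ (d : ι → ℚ) (B : Matrix ι ι ℚ), (∀ i, d i ≠ 0) ∧ Bᵀ = B ∧
    A.map (Int.cast : ℤ → ℚ) = Matrix.diagonal d * B

/-- `A` is of finite type: `xᵀ A x > 0` for all nonzero real `x`. -/
def FiniteType (A : Matrix ι ι ℤ) : Prop :=
  ∀ x : ι → ℝ, x ≠ 0 → 0 < x ⬝ᵥ ((A.map (Int.cast : ℤ → ℝ)) *ᵥ x)

/-- `A` is of affine type: positive semidefinite of rank `n - 1`. -/
def AffineType (A : Matrix ι ι ℤ) : Prop :=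
  (∀ x : ι → ℝ, 0 ≤ x ⬝ᵥ ((A.map (Int.cast : ℤ → ℝ)) *ᵥ x)) ∧
    (A.map (Int.cast : ℤ → ℝ)).rank = Fintype.card ι - 1

/-- `A` is of indefinite type: neither finite nor affine type. -/
def IndefiniteType (A : Matrix ι ι ℤ) : Prop := ¬FiniteType A ∧ ¬AffineType A

end Defs

/-- The degree-1 element `ω'_n = ∑_{j ≤ n-1} a_{jn} ω_j ∈ ℚ[ω_1, …, ω_{n-1}]`. -/
noncomputable def omegaPrime {n : ℕ} (A : Matrix (Fin (n + 1)) (Fin (n + 1)) ℤ) :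
    MvPolynomial (Fin n) ℚ :=
  ∑ j : Fin n, (A j.castSucc (Fin.last n) : ℚ) • X j

/-!
Setting `ω_n = 0` commutes with the reflections `σ_i`, `i < n`, so `ψ'` is `W(A')`-invariant.
If `ψ'` vanished, then `ψ = ω_n ℓ` with `ℓ` linear. Since `σ_i ℓ = ℓ - ℓ_i α_i`, invariance
under `σ_i` for `i < n` kills every coefficient of `ℓ` but the last, so `ψ = c ω_n²`; invariance
under `σ_n` then forces `a_{jn} = 0` for all `j ≠ n`, so `A` decomposes as soon as `n ≥ 2`.
For `n = 1` the form `ω_1²` is invariant and restricts to `0`, but then `A = (2)` is of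
finite type.
-/

namespace MvPolynomial

variable {R σ : Type*} [CommRing R]

theorem IsHomogeneous.of_X_mul {i : σ} {p : MvPolynomial σ R} {m : ℕ}
    (h : (X i * p).IsHomogeneous (m + 1)) : p.IsHomogeneous m := by
  intro d hd
  have := h (show coeff (Finsupp.single i 1 + d) (X i * p) ≠ 0 by rwa [coeff_X_mul])
  simp only [map_add, Finsupp.weight_single, Pi.one_apply, smul_eq_mul, mul_one] at this
  omega

theorem IsHomogeneous.exists_eq_sum_smul_X [Fintype σ] {p : MvPolynomial σ R}
    (h : p.IsHomogeneous 1) : ∃ c : σ → R, p = ∑ i, c i • X i := by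
  rw [← mem_homogeneousSubmodule, homogeneousSubmodule_one_eq_span_X,
    Submodule.mem_span_range_iff_exists_fun] at h
  obtain ⟨c, hc⟩ := h
  exact ⟨c, hc.symm⟩

variable (R) in
noncomputable def restrictLast (n : ℕ) :
    MvPolynomial (Fin (n + 1)) R →ₐ[R] MvPolynomial (Fin n) R :=
  aeval (Fin.snoc X 0 : Fin (n + 1) → MvPolynomial (Fin n) R)

variable {n : ℕ}

@[simp]
theorem restrictLast_X_castSucc (k : Fin n) : restrictLast R n (X k.castSucc) = X k := by
  simp [restrictLast]

@[simp]
theorem restrictLast_X_last : restrictLast R n (X (Fin.last n)) = 0 := by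
  simp [restrictLast]

theorem X_last_dvd_of_restrictLast_eq_zero {p : MvPolynomial (Fin (n + 1)) R}
    (hp : restrictLast R n p = 0) : X (Fin.last n) ∣ p := by
  set I := Ideal.span {(X (Fin.last n) : MvPolynomial (Fin (n + 1)) R)}
  have hfactor : ((Ideal.Quotient.mkₐ R I).comp (rename Fin.castSucc)).comp (restrictLast R n) =
      Ideal.Quotient.mkₐ R I := by
    ext j
    refine Fin.lastCases ?_ (fun k => ?_) j
    · simp [I]
    · simp
  rw [← Ideal.mem_span_singleton, ← Ideal.Quotient.eq_zero_iff_mem, ← Ideal.Quotient.mkₐ_eq_mk R,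
    ← AlgHom.congr_fun hfactor p]
  simp [hp]

theorem IsHomogeneous.restrictLast {p : MvPolynomial (Fin (n + 1)) R} {m : ℕ}
    (h : p.IsHomogeneous m) : (MvPolynomial.restrictLast R n p).IsHomogeneous m := by
  have hX : ∀ j,
      ((Fin.snoc X 0 : Fin (n + 1) → MvPolynomial (Fin n) R) j).IsHomogeneous 1 :=
    Fin.lastCases (by simpa using isHomogeneous_zero _ _ 1) fun k => by
      simpa using isHomogeneous_X R k
  have h' := h.aeval _ hX
  rwa [one_mul] at h'

end MvPolynomial

section CartanMatrix

variable {ι : Type*} [Fintype ι] (A : Matrix ι ι ℤ)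

theorem finiteType_of_subsingleton [Subsingleton ι] (hA : ∀ i, 0 < A i i) : FiniteType A := by
  intro x hx
  obtain ⟨i, hi⟩ := Function.ne_iff.mp hx
  simp only [dotProduct, mulVec, Fintype.sum_subsingleton _ i, map_apply]
  have : (0 : ℝ) < A i i := by exact_mod_cast hA i
  nlinarith [mul_self_pos.mpr hi]

variable [DecidableEq ι]

theorem weylRefl_X (i j : ι) :
    weylRefl A i (X j) = X j - if j = i then simpleRoot A i else 0 :=
  aeval_X _ _

@[simp]
theorem eval_piSingle_simpleRoot (i j : ι) : eval (Pi.single j 1) (simpleRoot A i) = A j i := by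
  simp [simpleRoot, Pi.single_apply]

theorem simpleRoot_ne_zero {i : ι} (hi : A i i ≠ 0) : simpleRoot A i ≠ 0 := fun h => by
  simpa [hi] using congrArg (eval (Pi.single i 1)) h

theorem weylRefl_sum_smul_X (i : ι) (c : ι → ℚ) :
    weylRefl A i (∑ k, c k • X k) = ∑ k, c k • X k - c i • simpleRoot A i := by
  simp [weylRefl_X, smul_sub, Finset.sum_sub_distrib]

theorem eq_zero_of_weylRefl_sum_smul_X_eq {i : ι} (hi : A i i ≠ 0) {c : ι → ℚ}
    (h : weylRefl A i (∑ k, c k • X k) = ∑ k, c k • X k) : c i = 0 := by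
  rw [weylRefl_sum_smul_X, sub_eq_self, smul_eq_zero] at h
  exact h.resolve_right (simpleRoot_ne_zero A hi)

theorem entry_eq_zero_of_weylRefl_X_sq_eq {i j : ι} (hji : j ≠ i)
    (h : weylRefl A i (X i ^ 2) = X i ^ 2) : A j i = 0 := by
  simpa [weylRefl_X, Pi.single_apply, hji] using congrArg (eval (Pi.single j 1)) h

variable {A} in
theorem Indecomposable.exists_entry_ne_zero [Nontrivial ι] (h : Indecomposable A) (i : ι) :
    ∃ j ≠ i, A j i ≠ 0 := by
  by_contra! h0
  refine h ⟨{i}ᶜ, {i}, exists_ne i, Set.singleton_nonempty i, disjoint_compl_left,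
    Set.compl_union_self _, fun j hj k hk => ?_⟩
  rw [Set.mem_singleton_iff.mp hk]
  exact h0 j hj

end CartanMatrix

section RestrictLast

variable {n : ℕ} (A : Matrix (Fin (n + 1)) (Fin (n + 1)) ℤ)

theorem restrictLast_simpleRoot_castSucc (i : Fin n) :
    restrictLast ℚ n (simpleRoot A i.castSucc) =
      simpleRoot (A.submatrix Fin.castSucc Fin.castSucc) i := by
  simp [simpleRoot, Fin.sum_univ_castSucc]

theorem restrictLast_comp_weylRefl_castSucc (i : Fin n) :
    (restrictLast ℚ n).comp (weylRefl A i.castSucc) =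
      (weylRefl (A.submatrix Fin.castSucc Fin.castSucc) i).comp (restrictLast ℚ n) := by
  ext j
  refine Fin.lastCases ?_ (fun k => ?_) j
  · simp [weylRefl_X, (Fin.castSucc_ne_last i).symm]
  · simp [weylRefl_X, restrictLast_simpleRoot_castSucc, apply_ite (restrictLast ℚ n)]

theorem WeylInvariant.restrictLast {ψ : MvPolynomial (Fin (n + 1)) ℚ}
    (h : WeylInvariant A ψ) :
    WeylInvariant (A.submatrix Fin.castSucc Fin.castSucc) (restrictLast ℚ n ψ) := fun i => by
  rw [← AlgHom.comp_apply, ← restrictLast_comp_weylRefl_castSucc, AlgHom.comp_apply, h]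

variable {A} in
theorem restrictLast_ne_zero_of_weylInvariant (hdiag : ∀ i, A i i ≠ 0) (hind : Indecomposable A)
    (hn : n ≠ 0) {ψ : MvPolynomial (Fin (n + 1)) ℚ} (hψ0 : ψ ≠ 0) (hψh : ψ.IsHomogeneous 2)
    (hψinv : WeylInvariant A ψ) : restrictLast ℚ n ψ ≠ 0 := by
  intro h0
  obtain ⟨ℓ, rfl⟩ := X_last_dvd_of_restrictLast_eq_zero h0
  obtain ⟨c, rfl⟩ := hψh.of_X_mul.exists_eq_sum_smul_X
  have hc : ∀ k : Fin n, c k.castSucc = 0 := fun k => by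
    have hk := hψinv k.castSucc
    rw [map_mul, weylRefl_X, if_neg (Fin.castSucc_ne_last k).symm, sub_zero] at hk
    exact eq_zero_of_weylRefl_sum_smul_X_eq A (hdiag _) (mul_left_cancel₀ (X_ne_zero _) hk)
  have hℓ : (∑ k, c k • X k : MvPolynomial (Fin (n + 1)) ℚ) =
      c (Fin.last n) • X (Fin.last n) := by
    simp [Fin.sum_univ_castSucc, hc]
  rw [hℓ, mul_smul_comm, ← sq] at hψ0 hψinv
  have hsq : weylRefl A (Fin.last n) (X (Fin.last n) ^ 2) = X (Fin.last n) ^ 2 := by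
    have hcl : c (Fin.last n) ≠ 0 := by rintro h; simp [h] at hψ0
    have hlast := hψinv (Fin.last n)
    rw [map_smul] at hlast
    exact smul_right_injective _ hcl hlast
  have : Nontrivial (Fin (n + 1)) := Fin.nontrivial_iff_two_le.mpr (by omega)
  obtain ⟨j, hj, hAj⟩ := hind.exists_entry_ne_zero (Fin.last n)
  exact hAj (entry_eq_zero_of_weylRefl_X_sq_eq A hj hsq)

end RestrictLast

theorem restriction_of_invariant_form_general {n : ℕ}
    (A : Matrix (Fin (n + 1)) (Fin (n + 1)) ℤ) (hA : IsCartanMatrix A)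
    (hind : Indecomposable A) (hidf : IndefiniteType A)
    (ψ : MvPolynomial (Fin (n + 1)) ℚ) (hψ0 : ψ ≠ 0) (hψh : ψ.IsHomogeneous 2)
    (hψinv : WeylInvariant A ψ)
    (ψ' : MvPolynomial (Fin n) ℚ)
    (hψ' : ψ' = aeval (Fin.snoc X 0 : Fin (n + 1) → MvPolynomial (Fin n) ℚ) ψ) :
    ψ' ≠ 0 ∧ ψ'.IsHomogeneous 2 ∧
      WeylInvariant (A.submatrix Fin.castSucc Fin.castSucc) ψ' := by
  have hn : n ≠ 0 := by
    rintro rfl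
    have : Subsingleton (Fin (0 + 1)) := inferInstanceAs (Subsingleton (Fin 1))
    exact hidf.1 (finiteType_of_subsingleton A fun i => by simp [hA.1 i])
  subst hψ'
  have hdiag : ∀ i, A i i ≠ 0 := fun i => by simp [hA.1 i]
  exact ⟨restrictLast_ne_zero_of_weylInvariant hdiag hind hn hψ0 hψh hψinv,
    hψh.restrictLast, hψinv.restrictLast A⟩

/-- for `A` indecomposable, symmetrizable, indefinite with `A'` (the upper-left
principal submatrix) indecomposable and symmetrizable, the restriction `ψ' = ψ|_{ω_n = 0}` of a
nonzero invariant quadratic form `ψ ∈ I²(A)` is a nonzero element of `I²(A')`. -/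
theorem restriction_of_invariant_form {n : ℕ}
    (A : Matrix (Fin (n + 1)) (Fin (n + 1)) ℤ) (hA : IsCartanMatrix A)
    (hind : Indecomposable A) (hsym : Symmetrizable A) (hidf : IndefiniteType A)
    (hind' : Indecomposable (A.submatrix Fin.castSucc Fin.castSucc))
    (hsym' : Symmetrizable (A.submatrix Fin.castSucc Fin.castSucc))
    (ψ : MvPolynomial (Fin (n + 1)) ℚ) (hψ0 : ψ ≠ 0) (hψh : ψ.IsHomogeneous 2)
    (hψinv : WeylInvariant A ψ)
    (ψ' : MvPolynomial (Fin n) ℚ)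
    (hψ' : ψ' = aeval (Fin.snoc X 0 : Fin (n + 1) → MvPolynomial (Fin n) ℚ) ψ) :
    ψ' ≠ 0 ∧ ψ'.IsHomogeneous 2 ∧
      WeylInvariant (A.submatrix Fin.castSucc Fin.castSucc) ψ' :=
  restriction_of_invariant_form_general A hA hind hidf ψ hψ0 hψh hψinv ψ' hψ'
end

section
/- Let A be an n×n Cartan matrix and let f ∈ I(A) be homogeneous of degree l, written f = Σ_{i=0}^l f_i·ω_n^{l−i} with each f_i ∈ ℚ[ω_1,…,ω_{n−1}] homogeneous of degree i. Then for every 0 ≤ j ≤ l: f_j = Σ_{i=0}^{j} (−1)^{l−i} · binom(l−i, l−j) · f_i · (ω'_n)^{j−i}, where ω'_n = Σ_{j=1}^{n−1} a_{jn} ω_j. -/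
/-
The reflection `σ_n` fixes `ω_1, …, ω_{n-1}` and, since `a_{nn} = 2`, sends `ω_n` to
`-ω_n - ω'_n`. Viewing `f` as a polynomial in `ω_n` over `ℚ[ω_1, …, ω_{n-1}]`, invariance under
`σ_n` alone says `f(ω_n) = f(-ω_n - ω'_n)`; expanding the right side by the binomial theorem and
comparing coefficients of `ω_n^{l-j}` gives the recursion.
-/

open MvPolynomial Matrix

section SplitLast

variable (n : ℕ) (R : Type*) [CommSemiring R]

/-- Regards `R[ω_1, …, ω_n]` as polynomials in `ω_n` over `R[ω_1, …, ω_{n-1}]`. -/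
noncomputable def splitLast :
    MvPolynomial (Fin (n + 1)) R →ₐ[R] Polynomial (MvPolynomial (Fin n) R) :=
  aeval (Fin.lastCases Polynomial.X fun j => Polynomial.C (X j))

variable {n R}

@[simp]
lemma splitLast_X_last : splitLast n R (X (Fin.last n)) = Polynomial.X := by
  simp [splitLast]

@[simp]
lemma splitLast_X_castSucc (j : Fin n) : splitLast n R (X j.castSucc) = Polynomial.C (X j) := by
  simp [splitLast]

@[simp]
lemma splitLast_rename_castSucc (p : MvPolynomial (Fin n) R) :
    splitLast n R (rename Fin.castSucc p) = Polynomial.C p := by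
  induction p using MvPolynomial.induction_on with
  | C a => simp [Polynomial.C_eq_algebraMap]
  | add p q hp hq => simp [hp, hq]
  | mul_X p j hp => simp [hp]

end SplitLast

lemma weylRefl_X_of_ne {ι : Type*} [Fintype ι] [DecidableEq ι] (A : Matrix ι ι ℤ) {i j : ι}
    (h : j ≠ i) : weylRefl A i (X j) = X j := by
  simp [weylRefl, h]

lemma weylRefl_last_X_last {n : ℕ} (A : Matrix (Fin (n + 1)) (Fin (n + 1)) ℤ)
    (h : A (Fin.last n) (Fin.last n) = 2) :
    weylRefl A (Fin.last n) (X (Fin.last n)) =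
      -X (Fin.last n) - rename Fin.castSucc (omegaPrime A) := by
  simp only [weylRefl, simpleRoot, omegaPrime, aeval_X, if_true, Fin.sum_univ_castSucc, h,
    Int.cast_ofNat, two_smul, map_sum, map_smul, rename_X]
  abel

lemma splitLast_weylRefl_last {n : ℕ} (A : Matrix (Fin (n + 1)) (Fin (n + 1)) ℤ)
    (h : A (Fin.last n) (Fin.last n) = 2) (f : MvPolynomial (Fin (n + 1)) ℚ) :
    splitLast n ℚ (weylRefl A (Fin.last n) f) =
      (splitLast n ℚ f).comp (-(Polynomial.X + Polynomial.C (omegaPrime A))) := by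
  rw [Polynomial.comp_eq_aeval]
  show ((splitLast n ℚ).comp (weylRefl A (Fin.last n))) f =
    (((Polynomial.aeval _).restrictScalars ℚ).comp (splitLast n ℚ)) f
  congr 1
  refine MvPolynomial.algHom_ext fun j => ?_
  cases j using Fin.lastCases with
  | last =>
    simp only [AlgHom.comp_apply, weylRefl_last_X_last A h, map_sub, map_neg, splitLast_X_last,
      splitLast_rename_castSucc, AlgHom.coe_restrictScalars', Polynomial.aeval_X]
    ring
  | cast j => simp [weylRefl_X_of_ne A (Fin.castSucc_lt_last j).ne]

namespace Polynomial

variable {R : Type*} [CommRing R]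

lemma coeff_sum_C_mul_X_pow_sub {l j : ℕ} (g : ℕ → R) (hj : j ≤ l) :
    (∑ i ∈ Finset.range (l + 1), C (g i) * X ^ (l - i)).coeff (l - j) = g j := by
  rw [finsetSum_coeff, Finset.sum_eq_single_of_mem j (by simp; omega)]
  · simp
  · intro i hi hij
    rw [coeff_C_mul_X_pow, if_neg]
    simp only [Finset.mem_range] at hi
    omega

lemma coeff_sum_C_mul_X_pow_sub_comp [Algebra ℚ R] {l j : ℕ} (g : ℕ → R) (w : R) (hj : j ≤ l) :
    ((∑ i ∈ Finset.range (l + 1), C (g i) * X ^ (l - i)).comp (-(X + C w))).coeff (l - j) =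
      ∑ i ∈ Finset.range (j + 1),
        ((-1 : ℚ) ^ (l - i) * ((l - i).choose (l - j) : ℚ)) • (g i * w ^ (j - i)) := by
  have hterm (i : ℕ) : (C (g i) * (-(X + C w)) ^ (l - i)).coeff (l - j) =
      ((-1 : ℚ) ^ (l - i) * ((l - i).choose (l - j) : ℚ)) • (g i * w ^ (l - i - (l - j))) := by
    rw [neg_pow, ← C_1, ← C_neg, ← C_pow, ← mul_assoc, ← C_mul, coeff_C_mul, coeff_X_add_C_pow,
      Algebra.smul_def]
    simp only [map_mul, map_pow, map_neg, map_one, map_natCast]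
    ring
  simp only [comp_eq_aeval, map_sum, map_mul, aeval_C, aeval_X_pow, algebraMap_eq,
    finsetSum_coeff, hterm]
  rw [← Finset.sum_subset (Finset.range_subset_range.2 (by omega : j + 1 ≤ l + 1))]
  · refine Finset.sum_congr rfl fun i hi => ?_
    rw [show l - i - (l - j) = j - i by simp only [Finset.mem_range] at hi; omega]
  · intro i hi hni
    simp only [Finset.mem_range] at hi hni
    rw [Nat.choose_eq_zero_of_lt (by omega : l - i < l - j)]
    simp

end Polynomial

theorem components_recursion_general {n l : ℕ}
    (A : Matrix (Fin (n + 1)) (Fin (n + 1)) ℤ) (hA : IsCartanMatrix A)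
    (f : MvPolynomial (Fin (n + 1)) ℚ)
    (hfinv : WeylInvariant A f)
    (g : ℕ → MvPolynomial (Fin n) ℚ)
    (hdec : f = ∑ i ∈ Finset.range (l + 1),
      rename Fin.castSucc (g i) * X (Fin.last n) ^ (l - i)) :
    ∀ j ≤ l, g j = ∑ i ∈ Finset.range (j + 1),
      ((-1 : ℚ) ^ (l - i) * ((l - i).choose (l - j) : ℚ)) •
        (g i * omegaPrime A ^ (j - i)) := by
  intro j hj
  set p := ∑ i ∈ Finset.range (l + 1), Polynomial.C (g i) * Polynomial.X ^ (l - i)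
  have hsplit : splitLast n ℚ f = p := by simp [hdec, p]
  have hfixed : p.comp (-(Polynomial.X + Polynomial.C (omegaPrime A))) = p := by
    rw [← hsplit, ← splitLast_weylRefl_last A (hA.1 _), hfinv]
  calc g j = p.coeff (l - j) := (Polynomial.coeff_sum_C_mul_X_pow_sub g hj).symm
    _ = (p.comp (-(Polynomial.X + Polynomial.C (omegaPrime A)))).coeff (l - j) := by rw [hfixed]
    _ = _ := Polynomial.coeff_sum_C_mul_X_pow_sub_comp g _ hj

/-- for `f = ∑ f_i ω_n^{l-i} ∈ I(A)` homogeneous of degree `l`, the components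
satisfy `f_j = ∑_{i=0}^{j} (−1)^{l−i} C(l−i, l−j) f_i (ω'_n)^{j−i}`. -/
theorem components_recursion {n l : ℕ}
    (A : Matrix (Fin (n + 1)) (Fin (n + 1)) ℤ) (hA : IsCartanMatrix A)
    (f : MvPolynomial (Fin (n + 1)) ℚ) (hfh : f.IsHomogeneous l)
    (hfinv : WeylInvariant A f)
    (g : ℕ → MvPolynomial (Fin n) ℚ) (hg : ∀ i, (g i).IsHomogeneous i)
    (hdec : f = ∑ i ∈ Finset.range (l + 1),
      rename Fin.castSucc (g i) * X (Fin.last n) ^ (l - i)) :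
    ∀ j ≤ l, g j = ∑ i ∈ Finset.range (j + 1),
      ((-1 : ℚ) ^ (l - i) * ((l - i).choose (l - j) : ℚ)) •
        (g i * omegaPrime A ^ (j - i)) :=
  components_recursion_general A hA f hfinv g hdec
end
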